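/- With the coarse bounds (ψ₀_lo)_t = (v₀)_t + max_{j ∈ S_t}((ψ_lo)_j − v_j) and (ψ₀_hi)_t = (v₀)_t + min_{j ∈ S_t}((ψ_hi)_j − v_j), suppose the prolongation P₀ : ℝᵐ → ℝⁿ has nonnegative entries with row sums at most 1, and (P₀)_{j,t} ≠ 0 only if j ∈ S_t. If w₀ ∈ ℝᵐ satisfies ψ₀_lo ≤ w₀ ≤ ψ₀_hi, then the prolongated update v + P₀(w₀ − v₀) satisfies ψ_lo ≤ v + P₀(w₀ − v₀) ≤ ψ_hi. -/
import Mathlib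


theorem prolongated_coarse_correction_feasible
    {n m : ℕ} (ψlo ψhi v : Fin n → ℝ)
    (hv : ∀ j, ψlo j ≤ v j ∧ v j ≤ ψhi j)
    (v0 ψ0lo ψ0hi w0 : Fin m → ℝ)
    (S : Fin m → Finset (Fin n)) (hS : ∀ t, (S t).Nonempty)
    (hlo : ∀ t, ψ0lo t = v0 t + (S t).sup' (hS t) (fun j => ψlo j - v j))
    (hhi : ∀ t, ψ0hi t = v0 t + (S t).inf' (hS t) (fun j => ψhi j - v j))
    (P0 : Matrix (Fin n) (Fin m) ℝ)
    (hP0nonneg : ∀ j t, 0 ≤ P0 j t)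
    (hP0rowsum : ∀ j, ∑ t, P0 j t ≤ 1)
    (hP0supp : ∀ j t, P0 j t ≠ 0 → j ∈ S t)
    (hw0 : ∀ t, ψ0lo t ≤ w0 t ∧ w0 t ≤ ψ0hi t) :
    ∀ j, ψlo j ≤ v j + ∑ t, P0 j t * (w0 t - v0 t) ∧
         v j + ∑ t, P0 j t * (w0 t - v0 t) ≤ ψhi j := by
  intro j
  have hterm_lo : ∀ t, P0 j t * (ψlo j - v j) ≤ P0 j t * (w0 t - v0 t) := by
    intro t
    rcases eq_or_ne (P0 j t) 0 with h0 | h0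
    · simp [h0]
    · have hjS := hP0supp j t h0
      have h1 : ψlo j - v j ≤ w0 t - v0 t := by
        have := (hw0 t).1
        rw [hlo t] at this
        have h2 : ψlo j - v j ≤ (S t).sup' (hS t) (fun j => ψlo j - v j) :=
          Finset.le_sup' (fun j => ψlo j - v j) hjS
        linarith
      exact mul_le_mul_of_nonneg_left h1 (hP0nonneg j t)
  have hterm_hi : ∀ t, P0 j t * (w0 t - v0 t) ≤ P0 j t * (ψhi j - v j) := by
    intro t
    rcases eq_or_ne (P0 j t) 0 with h0 | h0
    · simp [h0]
    · have hjS := hP0supp j t h0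
      have h1 : w0 t - v0 t ≤ ψhi j - v j := by
        have := (hw0 t).2
        rw [hhi t] at this
        have h2 : (S t).inf' (hS t) (fun j => ψhi j - v j) ≤ ψhi j - v j :=
          Finset.inf'_le (fun j => ψhi j - v j) hjS
        linarith
      exact mul_le_mul_of_nonneg_left h1 (hP0nonneg j t)
  have hsum_lo : (∑ t, P0 j t) * (ψlo j - v j) ≤ ∑ t, P0 j t * (w0 t - v0 t) := by
    rw [Finset.sum_mul]
    exact Finset.sum_le_sum fun t _ => hterm_lo t
  have hsum_hi : ∑ t, P0 j t * (w0 t - v0 t) ≤ (∑ t, P0 j t) * (ψhi j - v j) := by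
    rw [Finset.sum_mul]
    exact Finset.sum_le_sum fun t _ => hterm_hi t
  have hrs := hP0rowsum j
  have hrs0 : 0 ≤ ∑ t, P0 j t := Finset.sum_nonneg fun t _ => hP0nonneg j t
  have hvl := (hv j).1
  have hvh := (hv j).2
  constructor
  · nlinarith [hsum_lo]
  · nlinarith [hsum_hi]
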